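/- Let N be a normal subgroup of the discrete Heisenberg group Γ such that Γ/N is non-abelian and torsion-free. Then N is the trivial subgroup. -/

import Mathlib

/-!
A nontrivial normal subgroup `N` of the Heisenberg group contains a nontrivial power of the
central generator `z = mk 0 0 1`: either its nontrivial element is central, or its commutator
with `γ₁` or `γ₂` is. Torsion-freeness of `Γ/N` then forces `z ∈ N`, and as every commutator
in `Γ` is a power of `z`, the quotient `Γ/N` is abelian.
-/

open Matrix

/-- A 3×3 matrix is upper unitriangular (Heisenberg) if it has the form
`[[1,a,c],[0,1,b],[0,0,1]]`. -/
def IsHeis {R : Type*} [CommRing R] (M : Matrix (Fin 3) (Fin 3) R) : Prop :=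
  M = !![1, M 0 1, M 0 2; 0, 1, M 1 2; 0, 0, 1]

/-- The Heisenberg group over `R`: upper unitriangular 3×3 matrices under
matrix multiplication. -/
def Heis (R : Type*) [CommRing R] : Type _ := {M : Matrix (Fin 3) (Fin 3) R // IsHeis M}

namespace Heis

variable {R : Type*} [CommRing R]

lemma isHeis_mk (a b c : R) : IsHeis !![1, a, c; 0, 1, b; 0, 0, 1] := by
  unfold IsHeis; norm_num <;> exact ⟨rfl, rfl⟩

lemma exists_abc {M : Matrix (Fin 3) (Fin 3) R} (h : IsHeis M) :
    ∃ a b c, M = !![1, a, c; 0, 1, b; 0, 0, 1] := ⟨_, _, _, h⟩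

lemma mul_mk (a b c a' b' c' : R) :
    !![1, a, c; 0, 1, b; 0, 0, 1] * !![1, a', c'; 0, 1, b'; 0, 0, 1]
      = !![1, a + a', c + a * b' + c'; 0, 1, b + b'; 0, 0, 1] := by
  simp [Matrix.mul_fin_three]; ring_nf <;> simp

lemma inv_mul_mk (a b c : R) :
    !![1, -a, a * b - c; 0, 1, -b; 0, 0, 1] * !![1, a, c; 0, 1, b; 0, 0, 1]
      = !![1, 0, 0; 0, 1, 0; 0, 0, 1] := by
  rw [mul_mk]; norm_num; ring_nf

instance : Group (Heis R) where
  mul x y := ⟨x.1 * y.1, by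
    obtain ⟨a, b, c, hx⟩ := exists_abc x.2
    obtain ⟨a', b', c', hy⟩ := exists_abc y.2
    rw [hx, hy, mul_mk]; exact isHeis_mk _ _ _⟩
  one := ⟨!![1, 0, 0; 0, 1, 0; 0, 0, 1], isHeis_mk 0 0 0⟩
  inv x := ⟨!![1, -(x.1 0 1), x.1 0 1 * x.1 1 2 - x.1 0 2; 0, 1, -(x.1 1 2); 0, 0, 1],
    isHeis_mk _ _ _⟩
  mul_assoc x y z := Subtype.ext (mul_assoc x.1 y.1 z.1)
  one_mul x := Subtype.ext (by
    show !![1, 0, 0; 0, 1, 0; 0, 0, 1] * x.1 = x.1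
    obtain ⟨a, b, c, hx⟩ := exists_abc x.2
    rw [hx, mul_mk]; norm_num)
  mul_one x := Subtype.ext (by
    show x.1 * !![1, 0, 0; 0, 1, 0; 0, 0, 1] = x.1
    obtain ⟨a, b, c, hx⟩ := exists_abc x.2
    rw [hx, mul_mk]; norm_num)
  inv_mul_cancel x := Subtype.ext (by
    show !![1, -(x.1 0 1), x.1 0 1 * x.1 1 2 - x.1 0 2; 0, 1, -(x.1 1 2); 0, 0, 1] * x.1
        = !![1, 0, 0; 0, 1, 0; 0, 0, 1]
    obtain ⟨a, b, c, hx⟩ := exists_abc x.2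
    rw [hx]; simpa using inv_mul_mk a b c)

lemma mul_val (x y : Heis R) : (x * y).1 = x.1 * y.1 := rfl
lemma one_val : (1 : Heis R).1 = !![1, 0, 0; 0, 1, 0; 0, 0, 1] := rfl

/-- The generator γ₁ of the discrete Heisenberg group. -/
def γ₁ : Heis ℤ := ⟨!![1, 1, 0; 0, 1, 0; 0, 0, 1], isHeis_mk 1 0 0⟩

/-- The generator γ₂ of the discrete Heisenberg group. -/
def γ₂ : Heis ℤ := ⟨!![1, 0, 0; 0, 1, 1; 0, 0, 1], isHeis_mk 0 1 0⟩

end Heis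

open scoped commutatorElement

namespace Heis

variable {R : Type*} [CommRing R]

def mk (a b c : R) : Heis R := ⟨!![1, a, c; 0, 1, b; 0, 0, 1], isHeis_mk a b c⟩

lemma mk_entries (x : Heis R) : mk (x.1 0 1) (x.1 1 2) (x.1 0 2) = x :=
  Subtype.ext x.2.symm

lemma mk_mul_mk (a b c a' b' c' : R) :
    mk a b c * mk a' b' c' = mk (a + a') (b + b') (c + a * b' + c') :=
  Subtype.ext (mul_mk a b c a' b' c')

lemma one_eq_mk : (1 : Heis R) = mk 0 0 0 := rfl

lemma inv_mk (a b c : R) : (mk a b c)⁻¹ = mk (-a) (-b) (a * b - c) := by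
  rw [inv_eq_iff_mul_eq_one, mk_mul_mk, one_eq_mk]
  congr 1 <;> ring

lemma commutatorElement_mk (a b c a' b' c' : R) :
    ⁅mk a b c, mk a' b' c'⁆ = mk 0 0 (a * b' - a' * b) := by
  rw [commutatorElement_def, inv_mk, inv_mk, mk_mul_mk, mk_mul_mk, mk_mul_mk]
  congr 1 <;> ring

lemma mk_zero_zero_zpow (c : R) (n : ℤ) : mk 0 0 c ^ n = mk 0 0 (n * c) := by
  induction n using Int.induction_on with
  | zero => simp [one_eq_mk]
  | succ k ih => rw [_root_.zpow_add_one, ih, mk_mul_mk]; congr 1 <;> push_cast <;> ring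
  | pred k ih => rw [_root_.zpow_sub_one, ih, inv_mk, mk_mul_mk]; congr 1 <;> push_cast <;> ring

lemma commutator_le_zpowers : commutator (Heis ℤ) ≤ Subgroup.zpowers (mk 0 0 1) := by
  rw [commutator_eq_closure, Subgroup.closure_le]
  rintro _ ⟨g, h, rfl⟩
  rw [← mk_entries g, ← mk_entries h, commutatorElement_mk]
  exact ⟨_, (mk_zero_zero_zpow _ _).trans (by rw [Int.cast_id, mul_one])⟩

lemma exists_mk_zero_zero_one_zpow_mem_of_ne_bot {N : Subgroup (Heis ℤ)} [N.Normal]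
    (hN : N ≠ ⊥) :
    ∃ k : ℤ, k ≠ 0 ∧ mk 0 0 1 ^ k ∈ N := by
  obtain ⟨x, hxN, hx1⟩ := N.bot_or_exists_ne_one.resolve_left hN
  have comm_mem : ∀ g, ⁅x, g⁆ ∈ N := fun g =>
    Subgroup.commutator_le_left N ⊤ (Subgroup.commutator_mem_commutator hxN (Subgroup.mem_top g))
  rw [← mk_entries x] at comm_mem hxN hx1
  set a := x.1 0 1
  set b := x.1 1 2
  set c := x.1 0 2
  simp only [mk_zero_zero_zpow, mul_one]
  by_cases ha : a = 0
  · by_cases hb : b = 0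
    · refine ⟨c, fun hc => hx1 ?_, by rwa [ha, hb] at hxN⟩
      rw [ha, hb, hc]; rfl
    · refine ⟨-b, neg_ne_zero.mpr hb, ?_⟩
      simpa [commutatorElement_mk] using comm_mem (mk 1 0 0)
  · exact ⟨a, ha, by simpa [commutatorElement_mk] using comm_mem (mk 0 1 0)⟩

end Heis

theorem Subgroup.mem_of_zpow_mem_of_quotient_torsionFree {G : Type*} [Group G]
    {N : Subgroup G} [N.Normal] (htf : ∀ x : G ⧸ N, x ≠ 1 → ¬ IsOfFinOrder x)
    {g : G} {k : ℤ} (hk : k ≠ 0) (hg : g ^ k ∈ N) : g ∈ N := by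
  rw [← QuotientGroup.eq_one_iff]
  by_contra hne
  refine htf _ hne (isOfFinOrder_iff_zpow_eq_one.mpr ⟨k, hk, ?_⟩)
  rwa [← QuotientGroup.mk_zpow, QuotientGroup.eq_one_iff]

/-- If N is a normal subgroup of the discrete Heisenberg group such that Γ/N is
non-abelian and torsion-free, then N is trivial. -/
theorem normal_subgroup_trivial_of_nonabelian_torsionfree_quotient
    (N : Subgroup (Heis ℤ)) [N.Normal]
    (hna : ¬ ∀ x y : Heis ℤ ⧸ N, x * y = y * x)
    (htf : ∀ x : Heis ℤ ⧸ N, x ≠ 1 → ¬ IsOfFinOrder x) :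
    N = ⊥ := by
  by_contra hN
  obtain ⟨k, hk, hkN⟩ := Heis.exists_mk_zero_zero_one_zpow_mem_of_ne_bot hN
  have hz : Heis.mk 0 0 1 ∈ N := Subgroup.mem_of_zpow_mem_of_quotient_torsionFree htf hk hkN
  have : IsMulCommutative (Heis ℤ ⧸ N) :=
    Subgroup.Normal.quotient_commutative_iff_commutator_le.mpr
      (Heis.commutator_le_zpowers.trans (Subgroup.zpowers_le.mpr hz))
  exact hna mul_comm'
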